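/- arXiv:math/0511655 — 2 statements merged into one kernel-verified Lean document; each statement's English description precedes it below -/
import Mathlib

section
/- Let G be a group generated by a finite symmetric set S, let d, w ∈ ℕ, and let A be a d×d matrix over ℂ[G] whose entries all have support contained in B_w. Let (F_n) be a Følner exhaustion of G. Then (dim V(F_n) − dim W(F_n))/|F_n| → 0 and (dim Z(F_n) − dim W(F_n))/|F_n| → 0 as n → ∞; in particular, if dim V(F_n)/|F_n| → c ∈ ℝ then also dim Z(F_n)/|F_n| → c and dim W(F_n)/|F_n| → c. -/
open Pointwise Filter Topology

section Defs

variable {G : Type*} [Group G]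

/-- The word ball of radius `k` with respect to the generating set `S`. -/
noncomputable def wball (S : Finset G) (k : ℕ) : Finset G :=
  letI := Classical.decEq G
  (insert (1 : G) S) ^ k

/-- The `k`-neighborhood `B_k(F) = B_k * F` of a finite set `F`. -/
noncomputable def wnbhd (S : Finset G) (k : ℕ) (F : Finset G) : Finset G :=
  letI := Classical.decEq G
  wball S k * F

/-- The `k`-interior `Ω_k(F)` of a finite set `F`. -/
noncomputable def winter (S : Finset G) (k : ℕ) (F : Finset G) : Finset G :=
  letI := Classical.decEq G
  F.filter fun p => wball S k * {p} ⊆ F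

/-- The boundary `∂F` of a finite set `F`. -/
noncomputable def wbdry (S : Finset G) (F : Finset G) : Finset G :=
  letI := Classical.decEq G
  F.filter fun p => ∃ s ∈ S, s * p ∉ F

/-- `S` is a finite symmetric generating set. -/
def IsSymmGen (S : Finset G) : Prop :=
  (∀ s ∈ S, s⁻¹ ∈ S) ∧ Subgroup.closure (S : Set G) = ⊤

/-- A Følner exhaustion of `G`. -/
def IsFolnerExhaustion (S : Finset G) (F : ℕ → Finset G) : Prop :=
  (1 : G) ∈ F 0 ∧ Monotone F ∧ (∀ g : G, ∃ n, g ∈ F n) ∧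
    Filter.Tendsto (fun n => ((wbdry S (F n)).card : ℝ) / ((F n).card : ℝ))
      Filter.atTop (nhds 0)

variable {d : ℕ}

/-- The space of vectors supported in `Fs` such that `A.mulVec f` vanishes on `Fv`. -/
noncomputable def kerOn (A : Matrix (Fin d) (Fin d) (MonoidAlgebra ℂ G))
    (Fs Fv : Finset G) : Submodule ℂ (Fin d → MonoidAlgebra ℂ G) where
  carrier := {f | (∀ i, (f i).coeff.support ⊆ Fs) ∧ ∀ i, ∀ g ∈ Fv, (A.mulVec f i).coeff g = 0}
  zero_mem' := ⟨fun i => by simp, fun i g hg => by simp [Matrix.mulVec_zero]⟩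
  add_mem' := by
    classical
    rintro f g ⟨hf1, hf2⟩ ⟨hg1, hg2⟩
    constructor
    · intro i
      exact Finsupp.support_add.trans (Finset.union_subset (hf1 i) (hg1 i))
    · intro i x hx
      have h : A.mulVec (f + g) = A.mulVec f + A.mulVec g := Matrix.mulVec_add A f g
      rw [h]
      show (A.mulVec f i + A.mulVec g i).coeff x = 0
      rw [MonoidAlgebra.coeff_add, Finsupp.add_apply, hf2 i x hx, hg2 i x hx, add_zero]
  smul_mem' := by
    classical
    rintro c f ⟨hf1, hf2⟩
    constructor
    · intro i
      exact (Finsupp.support_smul).trans (hf1 i)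
    · intro i x hx
      have h : A.mulVec (c • f) = c • A.mulVec f := Matrix.mulVec_smul A c f
      rw [h]
      show (c • A.mulVec f i).coeff x = 0
      rw [MonoidAlgebra.coeff_smul, Finsupp.smul_apply, hf2 i x hx, smul_zero]

/-- The space of vectors supported in `Fs` with `A.mulVec f = 0`. -/
noncomputable def kerAll (A : Matrix (Fin d) (Fin d) (MonoidAlgebra ℂ G))
    (Fs : Finset G) : Submodule ℂ (Fin d → MonoidAlgebra ℂ G) where
  carrier := {f | (∀ i, (f i).coeff.support ⊆ Fs) ∧ A.mulVec f = 0}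
  zero_mem' := ⟨fun i => by simp, Matrix.mulVec_zero A⟩
  add_mem' := by
    classical
    rintro f g ⟨hf1, hf2⟩ ⟨hg1, hg2⟩
    exact ⟨fun i => Finsupp.support_add.trans (Finset.union_subset (hf1 i) (hg1 i)),
      by rw [Matrix.mulVec_add, hf2, hg2, add_zero]⟩
  smul_mem' := by
    classical
    rintro c f ⟨hf1, hf2⟩
    exact ⟨fun i => (Finsupp.support_smul).trans (hf1 i),
      by rw [Matrix.mulVec_smul, hf2, smul_zero]⟩

/-- `V(F)`. -/
noncomputable def VSpace (A : Matrix (Fin d) (Fin d) (MonoidAlgebra ℂ G)) (F : Finset G) :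
    Submodule ℂ (Fin d → MonoidAlgebra ℂ G) :=
  kerOn A F F

/-- `Z(F)`. -/
noncomputable def ZSpace (S : Finset G) (w : ℕ) (A : Matrix (Fin d) (Fin d) (MonoidAlgebra ℂ G))
    (F : Finset G) : Submodule ℂ (Fin d → MonoidAlgebra ℂ G) :=
  kerOn A (wnbhd S w F) F

/-- `W(F)`. -/
noncomputable def WSpace (S : Finset G) (w : ℕ) (A : Matrix (Fin d) (Fin d) (MonoidAlgebra ℂ G))
    (F : Finset G) : Submodule ℂ (Fin d → MonoidAlgebra ℂ G) :=
  kerAll A (winter S w F)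

/-- `A.mulVec` as a `ℂ`-linear map. -/
noncomputable def mulVecL {R : Type*} [Ring R] [Algebra ℂ R] {d : ℕ}
    (A : Matrix (Fin d) (Fin d) R) : (Fin d → R) →ₗ[ℂ] (Fin d → R) where
  toFun := A.mulVec
  map_add' := Matrix.mulVec_add A
  map_smul' c v := Matrix.mulVec_smul A c v

/-- Coordinatewise restriction to `F` (multiplication by the indicator of `F`). -/
noncomputable def restrictTo (d : ℕ) (F : Finset G) :
    (Fin d → MonoidAlgebra ℂ G) →ₗ[ℂ] (Fin d → MonoidAlgebra ℂ G) :=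
  letI := Classical.decEq G
  { toFun := fun f i => MonoidAlgebra.ofCoeff ((f i).coeff.filter (· ∈ F))
    map_add' := fun f g => by
      funext i
      exact congrArg MonoidAlgebra.ofCoeff Finsupp.filter_add
    map_smul' := fun c f => by
      funext i
      exact congrArg MonoidAlgebra.ofCoeff Finsupp.filter_smul }

end Defs

section Tiling

variable {ι α : Type*}

/-- An `ε`-disjoint family of finite sets. -/
def EpsDisjoint (I : Finset ι) (A : ι → Finset α) (ε : ℝ) : Prop :=
  ∃ Ab : ι → Finset α, (∀ i ∈ I, Ab i ⊆ A i) ∧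
    (∀ i ∈ I, ((1 - ε) * (A i).card : ℝ) ≤ ((Ab i).card : ℝ)) ∧
    ∀ i ∈ I, ∀ j ∈ I, i ≠ j → Disjoint (Ab i) (Ab j)

/-- The family `(A i)_{i ∈ I}` `a`-covers `X`. -/
def CoversFrac (I : Finset ι) (A : ι → Finset α) (X : Finset α) (a : ℝ) : Prop :=
  letI := Classical.decEq α
  (a * X.card : ℝ) ≤ ((X ∩ I.biUnion A).card : ℝ)

/-- The family `(A i)_{i ∈ I}` `δ`-evenly covers `X`. -/
def EvenCovering (I : Finset ι) (A : ι → Finset α) (X : Finset α) (δ : ℝ) : Prop :=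
  letI := Classical.decEq α
  ∃ M : ℕ, 1 ≤ M ∧ (∀ p ∈ X, (I.filter fun i => p ∈ A i).card ≤ M) ∧
    ((1 - δ) * M * X.card : ℝ) ≤ ∑ i ∈ I, ((A i).card : ℝ)

/-- The right translate `H·x`. -/
noncomputable def rtrans [Mul α] (H : Finset α) (x : α) : Finset α :=
  letI := Classical.decEq α
  H.image (· * x)

end Tiling

section Supp

variable {G : Type*} [Group G]

/-- Vectors all of whose coordinates are supported in `F`. -/
noncomputable def suppIn (d : ℕ) (F : Finset G) :
    Submodule ℂ (Fin d → MonoidAlgebra ℂ G) where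
  carrier := {f | ∀ i, (f i).coeff.support ⊆ F}
  zero_mem' := fun i => by simp
  add_mem' := by
    classical
    intro f g hf hg i
    exact Finsupp.support_add.trans (Finset.union_subset (hf i) (hg i))
  smul_mem' := fun c f hf i => (Finsupp.support_smul).trans (hf i)

end Supp

/-!
Clearly `W(F) ≤ V(F) ≤ Z(F)`. Conversely, a vector of `Z(F)` vanishing on the layer
`L = B_w(F) \ Ω_{2w}(F)` is supported in `Ω_{2w}(F)`, so `A f` is supported in `F`, where it
vanishes; hence `f ∈ W(F)` and `dim Z(F) ≤ dim W(F) + d |L|`. By symmetry of `S`, every point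
of `L` is within word distance `2w` of `∂F`, so `|L| ≤ |B_{2w}| |∂F| = o(|F|)` along a Følner
sequence.
-/

section WordBall

variable {G : Type*} [Group G] {S : Finset G}

lemma one_mem_wball (S : Finset G) (k : ℕ) : (1 : G) ∈ wball S k := by
  classical
  exact Finset.one_mem_pow (Finset.mem_insert_self 1 S)

lemma mul_mem_wball {k l : ℕ} {a b : G} (ha : a ∈ wball S k) (hb : b ∈ wball S l) :
    a * b ∈ wball S (k + l) := by
  classical
  unfold wball at *
  rw [pow_add]
  exact Finset.mul_mem_mul ha hb

lemma wball_mono : Monotone (wball S) := fun k l hkl a ha => by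
  simpa [Nat.add_sub_cancel' hkl] using mul_mem_wball ha (one_mem_wball S (l - k))

lemma inv_mem_wball (hS : ∀ s ∈ S, s⁻¹ ∈ S) {k : ℕ} {a : G} (ha : a ∈ wball S k) :
    a⁻¹ ∈ wball S k := by
  classical
  have hsymm : (insert (1 : G) S)⁻¹ = insert 1 S := by
    refine le_antisymm (fun x hx => ?_) (fun x hx => ?_)
    · simp only [Finset.inv_insert, inv_one, Finset.mem_insert, Finset.mem_inv'] at hx ⊢
      exact hx.imp_right (by simpa using hS _ ·)
    · simp only [Finset.inv_insert, inv_one, Finset.mem_insert, Finset.mem_inv'] at hx ⊢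
      exact hx.imp_right (hS x)
  unfold wball at *
  rw [← hsymm, inv_pow]
  exact Finset.inv_mem_inv ha

end WordBall

section Layers

variable {G : Type*} [Group G] {S F : Finset G} {k : ℕ}

lemma mem_wnbhd {x : G} : x ∈ wnbhd S k F ↔ ∃ a ∈ wball S k, ∃ p ∈ F, a * p = x := by
  classical
  simp [wnbhd, Finset.mem_mul]

lemma mem_winter {p : G} : p ∈ winter S k F ↔ p ∈ F ∧ ∀ a ∈ wball S k, a * p ∈ F := by
  classical
  simp [winter, Finset.subset_iff, Finset.mem_mul]

lemma mem_wbdry {q : G} : q ∈ wbdry S F ↔ q ∈ F ∧ ∃ s ∈ S, s * q ∉ F := by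
  classical
  simp [wbdry]

lemma winter_subset : winter S k F ⊆ F := fun _ hp => (mem_winter.mp hp).1

lemma winter_anti {l : ℕ} (hkl : k ≤ l) : winter S l F ⊆ winter S k F := fun _ hp =>
  mem_winter.mpr ⟨(mem_winter.mp hp).1, fun a ha => (mem_winter.mp hp).2 a (wball_mono hkl ha)⟩

lemma subset_wnbhd : F ⊆ wnbhd S k F := fun p hp =>
  mem_wnbhd.mpr ⟨1, one_mem_wball S k, p, hp, one_mul p⟩

lemma wnbhd_mono {l : ℕ} (hkl : k ≤ l) : wnbhd S k F ⊆ wnbhd S l F := fun _ hx => by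
  obtain ⟨a, ha, p, hp, rfl⟩ := mem_wnbhd.mp hx
  exact mem_wnbhd.mpr ⟨a, wball_mono hkl ha, p, hp, rfl⟩

-- `q` is the last point of `F` on the path from `p` to `a * p` along the letters of `a`.
lemma exists_mem_wbdry_of_mul_notMem {a p : G} (ha : a ∈ wball S k) (hp : p ∈ F)
    (hap : a * p ∉ F) :
    ∃ q ∈ wbdry S F, ∃ b ∈ wball S k, ∃ c ∈ wball S k, q = b * p ∧ a * p = c * q := by
  classical
  induction k generalizing a p with
  | zero =>
    obtain rfl : a = 1 := by simpa [wball] using ha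
    exact absurd (by simpa using hp) hap
  | succ k ih =>
    obtain ⟨a, ha', t, ht, rfl⟩ : ∃ a ∈ wball S k, ∃ t ∈ insert 1 S, a * t = _ := by
      simpa [wball, pow_succ, Finset.mem_mul] using ha
    have ht1 : t ∈ wball S 1 := by simpa [wball] using ht
    by_cases htp : t * p ∈ F
    · obtain ⟨q, hq, b, hb, c, hc, rfl, hcq⟩ := ih ha' htp (by rwa [← mul_assoc])
      exact ⟨_, hq, b * t, mul_mem_wball hb ht1, c, wball_mono k.le_succ hc,
        by rw [mul_assoc], by rw [mul_assoc, hcq]⟩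
    · have htS : t ∈ S := (Finset.mem_insert.mp ht).resolve_left
        (by rintro rfl; exact htp (by simpa using hp))
      exact ⟨p, mem_wbdry.mpr ⟨hp, t, htS, htp⟩, 1, one_mem_wball S _, a * t,
        mul_mem_wball ha' ht1, (one_mul p).symm, rfl⟩

lemma wnbhd_sdiff_winter_subset [DecidableEq G] (hS : ∀ s ∈ S, s⁻¹ ∈ S) :
    wnbhd S k F \ winter S k F ⊆ wball S k * wbdry S F := by
  intro x hx
  obtain ⟨hxN, hxΩ⟩ := Finset.mem_sdiff.mp hx
  by_cases hxF : x ∈ F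
  · obtain ⟨a, ha, hax⟩ : ∃ a ∈ wball S k, a * x ∉ F := by
      simpa [mem_winter, hxF] using hxΩ
    obtain ⟨q, hq, b, hb, -, -, rfl, -⟩ := exists_mem_wbdry_of_mul_notMem ha hxF hax
    exact Finset.mem_mul.mpr ⟨b⁻¹, inv_mem_wball hS hb, b * x, hq, by group⟩
  · obtain ⟨a, ha, p, hp, rfl⟩ := mem_wnbhd.mp hxN
    obtain ⟨q, hq, -, -, c, hc, -, hcq⟩ := exists_mem_wbdry_of_mul_notMem ha hp hxF
    exact Finset.mem_mul.mpr ⟨c, hc, q, hq, hcq.symm⟩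

lemma card_wnbhd_sdiff_winter_le [DecidableEq G] (hS : ∀ s ∈ S, s⁻¹ ∈ S) :
    (wnbhd S k F \ winter S k F).card ≤ (wball S k).card * (wbdry S F).card :=
  (Finset.card_le_card (wnbhd_sdiff_winter_subset hS)).trans Finset.card_mul_le

end Layers

lemma Submodule.finrank_inf_ker_add_finrank_map {K V V₂ : Type*} [DivisionRing K]
    [AddCommGroup V] [Module K V] [AddCommGroup V₂] [Module K V₂]
    (Z : Submodule K V) [FiniteDimensional K Z] (π : V →ₗ[K] V₂) :
    Module.finrank K ↥(Z ⊓ LinearMap.ker π) + Module.finrank K (Z.map π)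
      = Module.finrank K Z := by
  rw [← LinearMap.finrank_range_add_finrank_ker (π.domRestrict Z), LinearMap.range_domRestrict,
    LinearMap.ker_domRestrict, ← Submodule.finrank_map_subtype_eq, Submodule.map_comap_subtype,
    add_comm]

lemma support_coeff_mulVec_subset {k G m n : Type*} [Semiring k] [Mul G] [DecidableEq G]
    [Fintype n] (A : Matrix m n (MonoidAlgebra k G)) (f : n → MonoidAlgebra k G)
    {P E : Finset G} (hA : ∀ i j, (A i j).coeff.support ⊆ P)
    (hf : ∀ j, (f j).coeff.support ⊆ E) (i : m) :
    (A.mulVec f i).coeff.support ⊆ P * E := by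
  simp only [Matrix.mulVec, dotProduct, MonoidAlgebra.coeff_sum]
  refine Finsupp.support_finsetSum.trans (Finset.biUnion_subset.mpr fun j _ => ?_)
  exact (MonoidAlgebra.support_coeff_mul_subset _ _).trans (Finset.mul_subset_mul (hA i j) (hf j))

section Spaces

variable {G : Type*} {d : ℕ}

lemma restrictTo_mem_suppIn (F : Finset G) (f : Fin d → MonoidAlgebra ℂ G) :
    restrictTo d F f ∈ suppIn d F := fun i => by
  classical
  simp only [restrictTo, LinearMap.coe_mk, AddHom.coe_mk, Finsupp.support_filter]
  exact fun x hx => (Finset.mem_filter.mp hx).2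

lemma mem_ker_restrictTo {F : Finset G} {f : Fin d → MonoidAlgebra ℂ G} :
    f ∈ LinearMap.ker (restrictTo d F) ↔ ∀ i, ∀ g ∈ F, (f i).coeff g = 0 := by
  classical
  simp [restrictTo, funext_iff, MonoidAlgebra.ext_iff, Finsupp.ext_iff, Finsupp.filter_apply]

noncomputable def suppInCoeffs (d : ℕ) (F : Finset G) :
    suppIn d F →ₗ[ℂ] (Fin d → F → ℂ) where
  toFun f i x := (f.1 i).coeff x
  map_add' _ _ := rfl
  map_smul' _ _ := rfl

lemma suppInCoeffs_injective (F : Finset G) : Function.Injective (suppInCoeffs d F) := by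
  intro f f' h
  ext i g
  by_cases hg : g ∈ F
  · exact congrFun (congrFun h i) ⟨g, hg⟩
  · rw [Finsupp.notMem_support_iff.mp (mt (f.2 i ·) hg),
      Finsupp.notMem_support_iff.mp (mt (f'.2 i ·) hg)]

instance (F : Finset G) : FiniteDimensional ℂ (suppIn d F) :=
  .of_injective _ (suppInCoeffs_injective F)

lemma finrank_suppIn_le (F : Finset G) : Module.finrank ℂ (suppIn d F) ≤ d * F.card := by
  simpa [Module.finrank_pi_fintype] using
    LinearMap.finrank_le_finrank_of_injective (suppInCoeffs_injective (d := d) F)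

variable [Group G] (A : Matrix (Fin d) (Fin d) (MonoidAlgebra ℂ G))

instance (Fs Fv : Finset G) : FiniteDimensional ℂ (kerOn A Fs Fv) :=
  Submodule.finiteDimensional_of_le (S₂ := suppIn d Fs) fun _ hf => hf.1

instance (Fs : Finset G) : FiniteDimensional ℂ (kerAll A Fs) :=
  Submodule.finiteDimensional_of_le (S₂ := suppIn d Fs) fun _ hf => hf.1

variable (S : Finset G) (w : ℕ) (F : Finset G)

instance : FiniteDimensional ℂ (VSpace A F) :=
  inferInstanceAs (FiniteDimensional ℂ (kerOn ..))

instance : FiniteDimensional ℂ (ZSpace S w A F) :=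
  inferInstanceAs (FiniteDimensional ℂ (kerOn ..))

instance : FiniteDimensional ℂ (WSpace S w A F) :=
  inferInstanceAs (FiniteDimensional ℂ (kerAll ..))

lemma WSpace_le_VSpace : WSpace S w A F ≤ VSpace A F := fun _ ⟨hsupp, hker⟩ =>
  ⟨fun i => (hsupp i).trans winter_subset, fun i g _ => by simp [hker]⟩

lemma VSpace_le_ZSpace : VSpace A F ≤ ZSpace S w A F := fun _ ⟨hsupp, hvan⟩ =>
  ⟨fun i => (hsupp i).trans subset_wnbhd, hvan⟩

variable {S w A F}

lemma ZSpace_inf_ker_restrictTo_le_WSpace [DecidableEq G]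
    (hA : ∀ i j, (A i j).coeff.support ⊆ wball S w) :
    ZSpace S w A F ⊓ LinearMap.ker (restrictTo d (wnbhd S w F \ winter S (2 * w) F))
      ≤ WSpace S w A F := by
  rintro f ⟨⟨hsupp, hvan⟩, hf⟩
  have hsupp' : ∀ i, (f i).coeff.support ⊆ winter S (2 * w) F := fun i g hg => by
    by_contra hgΩ
    exact Finsupp.mem_support_iff.mp hg
      (mem_ker_restrictTo.mp hf i g (Finset.mem_sdiff.mpr ⟨hsupp i hg, hgΩ⟩))
  have hAf : ∀ i, (A.mulVec f i).coeff.support ⊆ F := fun i =>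
    (support_coeff_mulVec_subset A f hA hsupp' i).trans fun _ hx => by
      obtain ⟨a, ha, p, hp, rfl⟩ := Finset.mem_mul.mp hx
      exact (mem_winter.mp hp).2 a (wball_mono (by omega) ha)
  refine ⟨fun i => (hsupp' i).trans (winter_anti (by omega)), funext fun i => ?_⟩
  ext g
  by_cases hg : g ∈ F
  · exact hvan i g hg
  · exact Finsupp.notMem_support_iff.mp (mt (hAf i ·) hg)

lemma finrank_ZSpace_le [DecidableEq G] (hA : ∀ i j, (A i j).coeff.support ⊆ wball S w) :
    Module.finrank ℂ (ZSpace S w A F)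
      ≤ Module.finrank ℂ (WSpace S w A F) + d * (wnbhd S w F \ winter S (2 * w) F).card := by
  set T := wnbhd S w F \ winter S (2 * w) F
  rw [← (ZSpace S w A F).finrank_inf_ker_add_finrank_map (restrictTo d T)]
  gcongr
  · exact Submodule.finrank_mono (ZSpace_inf_ker_restrictTo_le_WSpace hA)
  · exact (Submodule.finrank_mono (Submodule.map_le_iff_le_comap.mpr
      fun f _ => Submodule.mem_comap.mpr (restrictTo_mem_suppIn T f))).trans (finrank_suppIn_le T)

end Spaces

lemma finrank_ZSpace_le_add_card_wbdry {G : Type*} [Group G] [DecidableEq G] {S : Finset G}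
    (hS : ∀ s ∈ S, s⁻¹ ∈ S) {d w : ℕ} {A : Matrix (Fin d) (Fin d) (MonoidAlgebra ℂ G)}
    (hA : ∀ i j, (A i j).coeff.support ⊆ wball S w) (F : Finset G) :
    Module.finrank ℂ (ZSpace S w A F)
      ≤ Module.finrank ℂ (WSpace S w A F) + d * (wball S (2 * w)).card * (wbdry S F).card := by
  have hlayer : (wnbhd S w F \ winter S (2 * w) F).card
      ≤ (wball S (2 * w)).card * (wbdry S F).card :=
    (Finset.card_le_card (Finset.sdiff_subset_sdiff (wnbhd_mono (by omega)) le_rfl)).trans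
      (card_wnbhd_sdiff_winter_le hS)
  rw [mul_assoc]
  exact (finrank_ZSpace_le hA).trans (by gcongr)

section Asymptotics

variable {α : Type*} {l : Filter α} {a b x y : α → ℕ}

lemma tendsto_sub_div_of_le_of_le_add (C : ℕ) (hxy : ∀ n, x n ≤ y n)
    (hyx : ∀ n, y n ≤ x n + C * b n) (hb : Tendsto (fun n => (b n : ℝ) / a n) l (𝓝 0)) :
    Tendsto (fun n => ((y n : ℝ) - x n) / a n) l (𝓝 0) := by
  refine squeeze_zero (fun n => div_nonneg (sub_nonneg.mpr (by exact_mod_cast hxy n))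
    (Nat.cast_nonneg _)) (fun n => ?_) (by simpa using hb.const_mul (C : ℝ))
  rw [← mul_div_assoc]
  gcongr
  rw [sub_le_iff_le_add']
  exact_mod_cast hyx n

lemma tendsto_div_iff_of_tendsto_sub_div {c : ℝ}
    (h : Tendsto (fun n => ((x n : ℝ) - y n) / a n) l (𝓝 0)) :
    Tendsto (fun n => (x n : ℝ) / a n) l (𝓝 c) ↔ Tendsto (fun n => (y n : ℝ) / a n) l (𝓝 c) := by
  constructor <;> intro hlim
  · simpa [sub_div] using hlim.sub h
  · simpa [sub_div] using hlim.add h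

end Asymptotics

theorem VZW_dim_asymptotics {G : Type*} [Group G] (S : Finset G) (hS : IsSymmGen S)
    (F : ℕ → Finset G) (hF : IsFolnerExhaustion S F)
    (d w : ℕ) (A : Matrix (Fin d) (Fin d) (MonoidAlgebra ℂ G))
    (hA : ∀ i j, (A i j).coeff.support ⊆ wball S w) :
    Tendsto (fun n => ((Module.finrank ℂ (VSpace A (F n)) : ℝ)
        - (Module.finrank ℂ (WSpace S w A (F n)) : ℝ)) / ((F n).card : ℝ)) atTop (𝓝 0) ∧
    Tendsto (fun n => ((Module.finrank ℂ (ZSpace S w A (F n)) : ℝ)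
        - (Module.finrank ℂ (WSpace S w A (F n)) : ℝ)) / ((F n).card : ℝ)) atTop (𝓝 0) ∧
    ∀ c : ℝ,
      Tendsto (fun n => (Module.finrank ℂ (VSpace A (F n)) : ℝ) / ((F n).card : ℝ)) atTop (𝓝 c) →
      Tendsto (fun n => (Module.finrank ℂ (ZSpace S w A (F n)) : ℝ) / ((F n).card : ℝ)) atTop (𝓝 c) ∧
      Tendsto (fun n => (Module.finrank ℂ (WSpace S w A (F n)) : ℝ) / ((F n).card : ℝ)) atTop (𝓝 c) := by
  classical
  have hWV n := Submodule.finrank_mono (WSpace_le_VSpace A S w (F n))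
  have hVZ n := Submodule.finrank_mono (VSpace_le_ZSpace A S w (F n))
  have hZW n := finrank_ZSpace_le_add_card_wbdry hS.1 hA (F n)
  have hVW := tendsto_sub_div_of_le_of_le_add _ hWV (fun n => (hVZ n).trans (hZW n)) hF.2.2.2
  have hZW := tendsto_sub_div_of_le_of_le_add _ (fun n => (hWV n).trans (hVZ n)) hZW hF.2.2.2
  refine ⟨hVW, hZW, fun c hV => ?_⟩
  have hW := (tendsto_div_iff_of_tendsto_sub_div hVW).mp hV
  exact ⟨(tendsto_div_iff_of_tendsto_sub_div hZW).mpr hW, hW⟩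
end

section
/- (Ornstein–Weiss even-covering lemma.) Let X be a nonempty finite set, let (H_j)_{j∈J} be a finite family of finite subsets of X forming a δ-even covering of X (0 ≤ δ < 1), and let 0 < ε < 1. Then there exists a subset I ⊆ J such that the subfamily (H_j)_{j∈I} is ε-disjoint and ε(1−δ)-covers X. -/
open Pointwise Filter Topology

/-!
Take an ε-disjoint subfamily `I` of maximal cardinality and let `Y` be its union. Maximality
forces every `H j` to have at least an ε-fraction of its points in `Y`. Summing over `J` and
double counting with the multiplicity bound `M` of the even covering gives
`ε (1 - δ) M |X| ≤ ε ∑ |H j| ≤ ∑ |H j ∩ Y| ≤ M |Y|`.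
-/

open Finset

theorem Finset.sum_card_inter_le_card_mul {ι α : Type*} [DecidableEq α] {J : Finset ι}
    {H : ι → Finset α} {s : Finset α} {n : ℕ} (h : ∀ a ∈ s, #{j ∈ J | a ∈ H j} ≤ n) :
    ∑ j ∈ J, #(H j ∩ s) ≤ #s * n := by
  calc ∑ j ∈ J, #(H j ∩ s) = ∑ a ∈ s, #{j ∈ J | a ∈ H j} := by
        simp_rw [inter_comm, ← filter_mem_eq_inter, card_filter]
        exact sum_comm
    _ ≤ #s * n := s.sum_le_card_nsmul _ _ h

theorem EpsDisjoint.empty {ι α : Type*} (H : ι → Finset α) (ε : ℝ) : EpsDisjoint ∅ H ε :=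
  ⟨H, by simp, by simp, by simp⟩

section OrnsteinWeiss

variable {ι α : Type*} [DecidableEq ι] [DecidableEq α]

theorem EpsDisjoint.insert {I : Finset ι} {H : ι → Finset α} {ε : ℝ} (hI : EpsDisjoint I H ε)
    {j : ι} (hj : j ∉ I) (hcard : (1 - ε) * #(H j) ≤ (#(H j \ I.biUnion H) : ℝ)) :
    EpsDisjoint (insert j I) H ε := by
  obtain ⟨Ab, hsub, hcardAb, hdisj⟩ := hI
  have hAbY : ∀ i ∈ I, Ab i ⊆ I.biUnion H := fun i hi =>
    (hsub i hi).trans (subset_biUnion_of_mem H hi)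
  have hne : ∀ i ∈ I, i ≠ j := fun i hi h => hj (h ▸ hi)
  refine ⟨Function.update Ab j (H j \ I.biUnion H), ?_, ?_, ?_⟩
  · intro i hi
    rcases mem_insert.mp hi with rfl | hi
    · simp [sdiff_subset]
    · simpa [hne i hi] using hsub i hi
  · intro i hi
    rcases mem_insert.mp hi with rfl | hi
    · simpa using hcard
    · simpa [hne i hi] using hcardAb i hi
  · intro i hi k hk hik
    rcases mem_insert.mp hi with rfl | hiI <;> rcases mem_insert.mp hk with rfl | hkI
    · exact absurd rfl hik
    · rw [Function.update_self, Function.update_of_ne (hne k hkI)]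
      exact disjoint_sdiff_self_left.mono_right (hAbY k hkI)
    · rw [Function.update_self, Function.update_of_ne (hne i hiI)]
      exact (disjoint_sdiff_self_left.mono_right (hAbY i hiI)).symm
    · rw [Function.update_of_ne (hne i hiI), Function.update_of_ne (hne k hkI)]
      exact hdisj i hiI k hkI hik

theorem exists_epsDisjoint_forall_mul_card_le_card_inter (J : Finset ι) (H : ι → Finset α)
    {ε : ℝ} (hε : ε ≤ 1) :
    ∃ I ⊆ J, EpsDisjoint I H ε ∧ ∀ j ∈ J, ε * #(H j) ≤ (#(H j ∩ I.biUnion H) : ℝ) := by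
  classical
  obtain ⟨I, hIP, hImax⟩ := (J.powerset.filter (EpsDisjoint · H ε)).exists_max_image card
    ⟨∅, mem_filter.mpr ⟨empty_mem_powerset J, EpsDisjoint.empty H ε⟩⟩
  obtain ⟨hIJ, hI⟩ := mem_filter.mp hIP
  refine ⟨I, mem_powerset.mp hIJ, hI, fun j hj => ?_⟩
  by_cases hjI : j ∈ I
  · rw [inter_eq_left.mpr (subset_biUnion_of_mem H hjI)]
    exact mul_le_of_le_one_left (Nat.cast_nonneg _) hε
  · by_contra! hlt
    have hsplit : (#(H j ∩ I.biUnion H) : ℝ) + #(H j \ I.biUnion H) = #(H j) := by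
      exact_mod_cast card_inter_add_card_sdiff (H j) (I.biUnion H)
    have hext := hImax (insert j I) (mem_filter.mpr
      ⟨mem_powerset.mpr (insert_subset hj (mem_powerset.mp hIJ)), hI.insert hjI (by linarith)⟩)
    rw [card_insert_of_notMem hjI] at hext
    omega

end OrnsteinWeiss

theorem ornstein_weiss_covering_general {ι α : Type*} (X : Finset α)
    (J : Finset ι) (H : ι → Finset α) (hsub : ∀ j ∈ J, H j ⊆ X)
    (δ ε : ℝ) (hε0 : 0 < ε) (hε1 : ε < 1)
    (hec : EvenCovering J H X δ) :
    ∃ I ⊆ J, EpsDisjoint I H ε ∧ CoversFrac I H X (ε * (1 - δ)) := by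
  classical
  obtain ⟨M, hM1, hMX, hMsum⟩ := hec
  obtain ⟨I, hIJ, hI, hmeet⟩ := exists_epsDisjoint_forall_mul_card_le_card_inter J H hε1.le
  set Y := I.biUnion H
  have hYX : Y ⊆ X := biUnion_subset.mpr fun i hi => hsub i (hIJ hi)
  have hdc : ∑ j ∈ J, (#(H j ∩ Y) : ℝ) ≤ #Y * M := by
    exact_mod_cast sum_card_inter_le_card_mul fun a ha => hMX a (hYX ha)
  have hM : (0 : ℝ) < M := by exact_mod_cast hM1
  refine ⟨I, hIJ, hI, ?_⟩
  unfold CoversFrac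
  rw [inter_eq_right.mpr hYX]
  refine le_of_mul_le_mul_right ?_ hM
  calc ε * (1 - δ) * #X * M = ε * ((1 - δ) * M * #X) := by ring
    _ ≤ ε * ∑ j ∈ J, (#(H j) : ℝ) := mul_le_mul_of_nonneg_left hMsum hε0.le
    _ ≤ ∑ j ∈ J, (#(H j ∩ Y) : ℝ) := by rw [mul_sum]; exact sum_le_sum hmeet
    _ ≤ #Y * M := hdc

theorem ornstein_weiss_covering {ι α : Type*} (X : Finset α) (hX : X.Nonempty)
    (J : Finset ι) (H : ι → Finset α) (hsub : ∀ j ∈ J, H j ⊆ X)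
    (δ ε : ℝ) (hδ0 : 0 ≤ δ) (hδ1 : δ < 1) (hε0 : 0 < ε) (hε1 : ε < 1)
    (hec : EvenCovering J H X δ) :
    ∃ I ⊆ J, EpsDisjoint I H ε ∧ CoversFrac I H X (ε * (1 - δ)) :=
  ornstein_weiss_covering_general X J H hsub δ ε hε0 hε1 hec
end
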